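/- arXiv:1405.0982 — 3 statements merged into one kernel-verified Lean document; each statement's English description precedes it below -/
import Mathlib

section
/- If T is a complete, reversible Turing machine, then the transition relation → is the graph of a bijective function F from the configuration space S × A^ℤ to itself; that is, there is a unique function F : S × A^ℤ → S × A^ℤ such that c → c' holds if and only if c' = F(c), and this F is a bijection. -/
/-!
Determinism and completeness make `→` the graph of a function `F`, and backward determinism makes
`F` injective, so the content is surjectivity. The instructions induce a relation on pairs
(state, scanned symbol) — a move keeps the symbol, a write replaces it — which is total by
completeness. Running the machine on constant tapes shows that reversibility makes this relation
left-unique, so, `S × A` being finite, every pair `(s', a')` is reached by some instruction, and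
that instruction yields a predecessor of every configuration in state `s'` scanning `a'`.
-/

/-- The two movement directions for a Turing machine head. -/
inductive Dir : Type
  | left : Dir
  | right : Dir

/-- A Turing machine with state set `S` and tape alphabet `A`: a transition table
consisting of move instructions and write instructions. -/
structure TuringMachine (S A : Type) where
  /-- The move instructions `(s, δ, s')`. -/
  moves : Set (S × Dir × S)
  /-- The write instructions `(s, a, s', a')`. -/
  writes : Set (S × A × S × A)

/-- Shifting the tape: moving the head in direction `δ`. -/
def shiftTape {A : Type} (δ : Dir) (τ : ℤ → A) : ℤ → A := fun n =>
  match δ with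
  | Dir.left => τ (n - 1)
  | Dir.right => τ (n + 1)

/-- Writing the symbol `a'` at position `0` of the tape. -/
def writeTape {A : Type} (a' : A) (τ : ℤ → A) : ℤ → A := fun n =>
  if n = 0 then a' else τ n

/-- The transition relation on the configuration space `S × A^ℤ` determined by the
transition table of the machine `M`. -/
def TMStep {S A : Type} (M : TuringMachine S A) (c c' : S × (ℤ → A)) : Prop :=
  (∃ δ : Dir, (c.1, δ, c'.1) ∈ M.moves ∧ c'.2 = shiftTape δ c.2) ∨
    (∃ a a' : A, (c.1, a, c'.1, a') ∈ M.writes ∧ c.2 0 = a ∧ c'.2 = writeTape a' c.2)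

/-- The machine is deterministic: every configuration has at most one successor. -/
def Deterministic {S A : Type} (M : TuringMachine S A) : Prop :=
  ∀ c c₁ c₂, TMStep M c c₁ → TMStep M c c₂ → c₁ = c₂

/-- The machine is reversible: it is deterministic and every configuration has at most
one predecessor. -/
def Reversible {S A : Type} (M : TuringMachine S A) : Prop :=
  Deterministic M ∧ ∀ c₁ c₂ c', TMStep M c₁ c' → TMStep M c₂ c' → c₁ = c₂

/-- The machine is complete: every configuration has at least one successor. -/
def Complete {S A : Type} (M : TuringMachine S A) : Prop :=
  ∀ c, ∃ c', TMStep M c c'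

open Relator

theorem Relator.LeftTotal.rightTotal_of_leftUnique {α : Type*} [Finite α] {R : α → α → Prop}
    (htot : LeftTotal R) (huniq : LeftUnique R) : RightTotal R := by
  choose f hf using htot
  have hinj : f.Injective := fun a b hab => huniq (hf a) (hab ▸ hf b)
  intro b
  obtain ⟨a, rfl⟩ := Finite.surjective_of_injective hinj b
  exact ⟨a, hf a⟩

theorem Relator.existsUnique_forall_iff_eq_apply {α β : Type*} {R : α → β → Prop}
    (htot : LeftTotal R) (huniq : RightUnique R) : ∃! f : α → β, ∀ a b, R a b ↔ b = f a := by
  choose f hf using htot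
  refine ⟨f, fun a b => ⟨fun h => huniq h (hf a), fun h => h ▸ hf a⟩, fun g hg => ?_⟩
  funext a
  exact (hg a (f a)).mp (hf a) |>.symm

theorem Relator.bijective_of_forall_iff_eq_apply {α β : Type*} {R : α → β → Prop} {f : α → β}
    (hf : ∀ a b, R a b ↔ b = f a) (hleft : LeftUnique R) (hright : RightTotal R) :
    f.Bijective := by
  refine ⟨fun a₁ a₂ h => hleft ((hf a₁ _).mpr rfl) ((hf a₂ _).mpr h), fun b => ?_⟩
  obtain ⟨a, ha⟩ := hright b
  exact ⟨a, ((hf a b).mp ha).symm⟩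

def Dir.opposite : Dir → Dir
  | Dir.left => Dir.right
  | Dir.right => Dir.left

theorem shiftTape_shiftTape_opposite {A : Type} (δ : Dir) (τ : ℤ → A) :
    shiftTape δ (shiftTape δ.opposite τ) = τ := by
  funext n
  cases δ <;> simp [shiftTape, Dir.opposite]

theorem shiftTape_const {A : Type} (δ : Dir) (a : A) : shiftTape δ (fun _ => a) = fun _ => a := by
  cases δ <;> rfl

theorem writeTape_writeTape {A : Type} (a b : A) (τ : ℤ → A) :
    writeTape a (writeTape b τ) = writeTape a τ := by
  funext n
  by_cases hn : n = 0 <;> simp [writeTape, hn]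

theorem writeTape_self {A : Type} (τ : ℤ → A) : writeTape (τ 0) τ = τ := by
  funext n
  by_cases hn : n = 0 <;> simp [writeTape, hn]

namespace TuringMachine

variable {S A : Type} {M : TuringMachine S A}

theorem step_of_mem_moves {s s' : S} {δ : Dir} (h : (s, δ, s') ∈ M.moves) (τ' : ℤ → A) :
    TMStep M (s, shiftTape δ.opposite τ') (s', τ') :=
  Or.inl ⟨δ, h, (shiftTape_shiftTape_opposite δ τ').symm⟩

theorem step_of_mem_writes {s s' : S} {a : A} (τ' : ℤ → A) (h : (s, a, s', τ' 0) ∈ M.writes) :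
    TMStep M (s, writeTape a τ') (s', τ') :=
  Or.inr ⟨a, τ' 0, h, by simp [writeTape], by rw [writeTape_writeTape, writeTape_self]⟩

/-- Not the action of the machine on the scanned symbol (after a move the head scans a new
cell), but a bookkeeping of the instructions by their source and target pairs. -/
def LocalStep (M : TuringMachine S A) (p q : S × A) : Prop :=
  (∃ δ, (p.1, δ, q.1) ∈ M.moves ∧ q.2 = p.2) ∨ (p.1, p.2, q.1, q.2) ∈ M.writes

theorem leftTotal_localStep (hcomp : Complete M) : LeftTotal (LocalStep M) := by
  rintro ⟨s, a⟩
  obtain ⟨c', hc'⟩ := hcomp (s, fun _ => a)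
  rcases hc' with ⟨δ, hm, -⟩ | ⟨_, b, hw, rfl, -⟩
  · exact ⟨(c'.1, a), Or.inl ⟨δ, hm, rfl⟩⟩
  · exact ⟨(c'.1, b), Or.inr hw⟩

theorem step_const_of_localStep {p q : S × A} (h : LocalStep M p q) :
    TMStep M (p.1, writeTape p.2 fun _ => q.2) (q.1, fun _ => q.2) := by
  rcases h with ⟨δ, hm, hq⟩ | hw
  · have hconst : writeTape p.2 (fun _ => q.2) = shiftTape δ.opposite fun _ => q.2 := by
      rw [shiftTape_const, ← hq]
      exact writeTape_self _
    exact hconst ▸ step_of_mem_moves hm _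
  · exact step_of_mem_writes (fun _ => q.2) hw

theorem leftUnique_localStep (hback : LeftUnique (TMStep M)) : LeftUnique (LocalStep M) := by
  intro p₁ p₂ q h₁ h₂
  obtain ⟨hs, hτ⟩ := Prod.mk.inj (hback (step_const_of_localStep h₁) (step_const_of_localStep h₂))
  exact Prod.ext hs (by simpa [writeTape] using congrFun hτ 0)

theorem exists_step_of_localStep {p : S × A} {s' : S} {τ' : ℤ → A}
    (h : LocalStep M p (s', τ' 0)) : ∃ c, TMStep M c (s', τ') := by
  rcases h with ⟨δ, hm, -⟩ | hw
  · exact ⟨_, step_of_mem_moves hm τ'⟩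
  · exact ⟨_, step_of_mem_writes τ' hw⟩

theorem rightTotal_step [Finite S] [Finite A] (hcomp : Complete M)
    (hback : LeftUnique (TMStep M)) : RightTotal (TMStep M) := by
  rintro ⟨s', τ'⟩
  obtain ⟨p, hp⟩ :=
    (leftTotal_localStep hcomp).rightTotal_of_leftUnique (leftUnique_localStep hback) (s', τ' 0)
  exact exists_step_of_localStep hp

end TuringMachine

/-- For a complete, reversible Turing machine, the transition relation is the graph of a
unique function `F` on the configuration space, and this function is a bijection. -/
theorem complete_reversible_step_is_bijection {S A : Type} [Finite S] [Finite A]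
    (M : TuringMachine S A) (hcomp : Complete M) (hrev : Reversible M) :
    ∃ F : S × (ℤ → A) → S × (ℤ → A),
      (∀ c c', TMStep M c c' ↔ c' = F c) ∧ Function.Bijective F ∧
      ∀ G : S × (ℤ → A) → S × (ℤ → A), (∀ c c', TMStep M c c' ↔ c' = G c) → G = F := by
  obtain ⟨hdet, hback⟩ := hrev
  obtain ⟨F, hF, hunique⟩ := existsUnique_forall_iff_eq_apply hcomp fun _ _ _ => hdet _ _ _
  exact ⟨F, hF, bijective_of_forall_iff_eq_apply hF hback (M.rightTotal_step hcomp hback),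
    hunique⟩
end

section
/- Given numbered pattern pairs for two elements of 2V, it is decidable whether the two elements are equal: the predicate on pairs of (naturally encoded) numbered pattern pairs which holds exactly when the two pattern pairs define the same homeomorphism of C² is computable. -/
/-- The Cantor space of infinite binary sequences. -/
abbrev Cantor : Type := ℕ → Bool

/-- Concatenation of a finite binary string with an infinite binary sequence. -/
def cat (α : List Bool) (ω : Cantor) : Cantor := fun k =>
  if h : k < α.length then α.get ⟨k, h⟩ else ω (k - α.length)

/-- The dyadic interval `I(α)`: all infinite binary sequences with prefix `α`. -/
def dyadicI (α : List Bool) : Set Cantor := Set.range (cat α)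

/-- The dyadic rectangle `R(α, β) = I(α) × I(β)` in `C²`. -/
def rect (α β : List Bool) : Set (Cantor × Cantor) :=
  {p | (∃ ψ, p.1 = cat α ψ) ∧ ∃ ω, p.2 = cat β ω}

/-- A finite list of dyadic rectangles forms a dyadic subdivision of `C²`. -/
def IsSubdivision (L : List (List Bool × List Bool)) : Prop :=
  (⋃ r ∈ L, rect r.1 r.2) = Set.univ ∧
    List.Pairwise (fun r s => Disjoint (rect r.1 r.2) (rect s.1 s.2)) L

/-- A numbered pattern pair for `2V`. -/
abbrev PatternPair : Type := List ((List Bool × List Bool) × (List Bool × List Bool))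

/-- The numbered pattern pair `pp` represents the map `f`: domains and ranges each form
dyadic subdivisions, and `f` maps each domain rectangle to the corresponding range
rectangle by prefix replacement. -/
def Represents (pp : PatternPair) (f : Cantor × Cantor → Cantor × Cantor) : Prop :=
  IsSubdivision (pp.map Prod.fst) ∧ IsSubdivision (pp.map Prod.snd) ∧
    ∀ r ∈ pp, ∀ ψ ω : Cantor,
      f (cat r.1.1 ψ, cat r.1.2 ω) = (cat r.2.1 ψ, cat r.2.2 ω)

/-! Two pattern pairs define the same map exactly when, for every domain rectangle of the
first and every domain rectangle of the second, the two prefix replacements agree on the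
intersection. The maps act coordinatewise, and two dyadic intervals `I(u)`, `I(v)` meet only
when one of `u`, `v` is a prefix of the other, say `v = u ++ t`; then the replacements
`u ↦ a` and `v ↦ b` agree on `I(u) ∩ I(v) = I(v)` iff `a ++ t = b`. This is a finite check on
strings, primitive recursive in the pattern pairs. -/

open Function

section Concatenation

variable {u v : List Bool} {ψ ω : Cantor} {k : ℕ}

theorem cat_apply_of_lt (h : k < u.length) (ψ : Cantor) : cat u ψ k = u[k] := by
  simp [cat, h]

theorem cat_apply_of_le (h : u.length ≤ k) (ψ : Cantor) : cat u ψ k = ψ (k - u.length) := by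
  simp [cat, not_lt.2 h]

theorem cat_append (u v : List Bool) (ψ : Cantor) : cat (u ++ v) ψ = cat u (cat v ψ) := by
  funext k
  by_cases hu : k < u.length
  · rw [cat_apply_of_lt hu, cat_apply_of_lt (by simp; omega), List.getElem_append_left hu]
  rw [cat_apply_of_le (not_lt.1 hu)]
  by_cases hv : k - u.length < v.length
  · rw [cat_apply_of_lt hv, cat_apply_of_lt (by simp; omega), List.getElem_append_right (by omega)]
  · rw [cat_apply_of_le (not_lt.1 hv), cat_apply_of_le (by simp; omega), List.length_append,
      Nat.sub_add_eq]

theorem cat_right_injective (u : List Bool) : Injective (cat u) := fun ψ ω h => by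
  funext k
  simpa [cat_apply_of_le] using congrFun h (k + u.length)

theorem length_le_of_cat_eq (h : cat u = cat v) : u.length ≤ v.length := by
  by_contra! hlt
  have := congrFun (congrFun h fun _ => !u[v.length]) v.length
  simp [cat_apply_of_lt hlt, cat_apply_of_le le_rfl] at this

theorem cat_injective : Injective cat := fun u v h =>
  List.ext_getElem (le_antisymm (length_le_of_cat_eq h) (length_le_of_cat_eq h.symm))
    fun k hu hv => by
      simpa [cat_apply_of_lt hu, cat_apply_of_lt hv] using congrFun (congrFun h default) k

theorem prefix_of_cat_eq (h : cat u ψ = cat v ω) (hl : u.length ≤ v.length) : u <+: v := by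
  rw [List.prefix_iff_eq_take]
  refine List.ext_getElem (by simp [hl]) fun k hu _ => ?_
  simpa [cat_apply_of_lt hu, cat_apply_of_lt (hu.trans_le hl)] using congrFun h k

theorem cat_eq_cat_iff_of_prefix (h : u <+: v) :
    cat u ψ = cat v ω ↔ ψ = cat (v.drop u.length) ω := by
  obtain ⟨t, rfl⟩ := h
  rw [List.drop_left, cat_append]
  exact (cat_right_injective u).eq_iff

theorem exists_cat_eq_cat_iff :
    (∃ ψ ω, cat u ψ = cat v ω) ↔ u <+: v ∨ v <+: u := by
  constructor
  · rintro ⟨ψ, ω, h⟩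
    exact (le_total u.length v.length).imp (prefix_of_cat_eq h) (prefix_of_cat_eq h.symm)
  · rintro (h | h)
    · exact ⟨_, default, (cat_eq_cat_iff_of_prefix h).2 rfl⟩
    · exact ⟨default, _, ((cat_eq_cat_iff_of_prefix h).2 rfl).symm⟩

end Concatenation

section Agreement

abbrev PatternEntry : Type := (List Bool × List Bool) × (List Bool × List Bool)

/-- A pair `x` encodes the prefix replacement `x.1 ↦ x.2` of `C`. -/
def ReplacementsAgree (x y : List Bool × List Bool) : Prop :=
  ∀ ψ ω, cat x.1 ψ = cat y.1 ω → cat x.2 ψ = cat y.2 ω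

def EntriesAgree (r s : PatternEntry) : Prop :=
  ∀ ψ ω ψ' ω', (cat r.1.1 ψ, cat r.1.2 ω) = (cat s.1.1 ψ', cat s.1.2 ω') →
    (cat r.2.1 ψ, cat r.2.2 ω) = (cat s.2.1 ψ', cat s.2.2 ω')

theorem replacementsAgree_iff_of_prefix {x y : List Bool × List Bool} (h : x.1 <+: y.1) :
    ReplacementsAgree x y ↔ x.2 ++ y.1.drop x.1.length = y.2 := by
  refine ⟨fun hxy => cat_injective <| funext fun ω => ?_, ?_⟩
  · rw [cat_append]
    exact hxy _ ω ((cat_eq_cat_iff_of_prefix h).2 rfl)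
  · intro hxy ψ ω e
    rw [cat_eq_cat_iff_of_prefix h] at e
    rw [e, ← cat_append, hxy]

theorem replacementsAgree_comm {x y : List Bool × List Bool} :
    ReplacementsAgree x y ↔ ReplacementsAgree y x :=
  ⟨fun h ω ψ e => (h ψ ω e.symm).symm, fun h ψ ω e => (h ω ψ e.symm).symm⟩

theorem replacementsAgree_iff {x y : List Bool × List Bool} :
    ReplacementsAgree x y ↔ (x.1 <+: y.1 → x.2 ++ y.1.drop x.1.length = y.2) ∧
      (y.1 <+: x.1 → y.2 ++ x.1.drop y.1.length = x.2) := by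
  refine ⟨fun h => ⟨fun hp => (replacementsAgree_iff_of_prefix hp).1 h,
    fun hp => (replacementsAgree_iff_of_prefix hp).1 (replacementsAgree_comm.1 h)⟩, ?_⟩
  rintro ⟨hxy, hyx⟩ ψ ω e
  rcases exists_cat_eq_cat_iff.1 ⟨ψ, ω, e⟩ with hp | hp
  · exact (replacementsAgree_iff_of_prefix hp).2 (hxy hp) ψ ω e
  · exact ((replacementsAgree_iff_of_prefix hp).2 (hyx hp)) ω ψ e.symm |>.symm

theorem entriesAgree_iff {r s : PatternEntry} :
    EntriesAgree r s ↔ ((r.1.1 <+: s.1.1 ∨ s.1.1 <+: r.1.1) →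
      (r.1.2 <+: s.1.2 ∨ s.1.2 <+: r.1.2) →
        ReplacementsAgree (r.1.1, r.2.1) (s.1.1, s.2.1) ∧
          ReplacementsAgree (r.1.2, r.2.2) (s.1.2, s.2.2)) := by
  simp only [EntriesAgree, ReplacementsAgree, Prod.mk.injEq, ← exists_cat_eq_cat_iff]
  constructor
  · rintro h ⟨ψ₀, ψ₀', h₁⟩ ⟨ω₀, ω₀', h₂⟩
    exact ⟨fun ψ ψ' e => (h ψ ω₀ ψ' ω₀' ⟨e, h₂⟩).1, fun ω ω' e => (h ψ₀ ω ψ₀' ω' ⟨h₁, e⟩).2⟩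
  · rintro h ψ ω ψ' ω' ⟨e₁, e₂⟩
    obtain ⟨h₁, h₂⟩ := h ⟨ψ, ψ', e₁⟩ ⟨ω, ω', e₂⟩
    exact ⟨h₁ ψ ψ' e₁, h₂ ω ω' e₂⟩

theorem Represents.exists_mem_eq_cat {pp : PatternPair} {f : Cantor × Cantor → Cantor × Cantor}
    (hf : Represents pp f) (p : Cantor × Cantor) :
    ∃ r ∈ pp, ∃ ψ ω, p = (cat r.1.1 ψ, cat r.1.2 ω) := by
  have hp : p ∈ ⋃ q ∈ pp.map Prod.fst, rect q.1 q.2 := hf.1.1 ▸ Set.mem_univ p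
  simp only [Set.mem_iUnion, List.mem_map] at hp
  obtain ⟨_, ⟨r, hr, rfl⟩, ⟨ψ, hψ⟩, ω, hω⟩ := hp
  exact ⟨r, hr, ψ, ω, Prod.ext hψ hω⟩

theorem Represents.eq_iff_forall_entriesAgree {pp₁ pp₂ : PatternPair}
    {f g : Cantor × Cantor → Cantor × Cantor} (hf : Represents pp₁ f) (hg : Represents pp₂ g) :
    f = g ↔ ∀ r ∈ pp₁, ∀ s ∈ pp₂, EntriesAgree r s := by
  constructor
  · rintro rfl r hr s hs ψ ω ψ' ω' e
    rw [← hf.2.2 r hr, e, hg.2.2 s hs]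
  · intro h
    funext p
    obtain ⟨r, hr, ψ, ω, rfl⟩ := hf.exists_mem_eq_cat p
    obtain ⟨s, hs, ψ', ω', e⟩ := hg.exists_mem_eq_cat (cat r.1.1 ψ, cat r.1.2 ω)
    rw [hf.2.2 r hr, e, hg.2.2 s hs]
    exact h r hr s hs ψ ω ψ' ω' e

end Agreement

section Primrec

open Primrec

theorem primrecRel_isPrefix {α : Type*} [Primcodable α] :
    PrimrecRel (· <+: · : List α → List α → Prop) :=
  (Primrec.eq.comp fst (list_take.comp (list_length.comp fst) snd)).of_eq
    fun _ => List.prefix_iff_eq_take.symm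

theorem primrecRel_replacementsAgree : PrimrecRel ReplacementsAgree := by
  have prefix₁ : PrimrecRel fun x y : List Bool × List Bool => x.1 <+: y.1 :=
    primrecRel_isPrefix.comp (fst.comp fst) (fst.comp snd)
  have prefix₂ : PrimrecRel fun x y : List Bool × List Bool => y.1 <+: x.1 :=
    primrecRel_isPrefix.comp (fst.comp snd) (fst.comp fst)
  have extends₁ : PrimrecRel fun x y : List Bool × List Bool =>
      x.2 ++ y.1.drop x.1.length = y.2 :=
    Primrec.eq.comp (list_append.comp (snd.comp fst)
      (list_drop.comp (list_length.comp (fst.comp fst)) (fst.comp snd))) (snd.comp snd)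
  have extends₂ : PrimrecRel fun x y : List Bool × List Bool =>
      y.2 ++ x.1.drop y.1.length = x.2 :=
    Primrec.eq.comp (list_append.comp (snd.comp snd)
      (list_drop.comp (list_length.comp (fst.comp snd)) (fst.comp fst))) (snd.comp fst)
  exact ((prefix₁.not.or extends₁).and (prefix₂.not.or extends₂)).of_eq fun _ => by
    rw [replacementsAgree_iff, imp_iff_not_or, imp_iff_not_or]

theorem primrecRel_entriesAgree : PrimrecRel EntriesAgree := by
  have comparable : PrimrecRel fun u v : List Bool => u <+: v ∨ v <+: u :=
    primrecRel_isPrefix.or primrecRel_isPrefix.swap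
  have comparable₁ : PrimrecRel fun r s : PatternEntry => r.1.1 <+: s.1.1 ∨ s.1.1 <+: r.1.1 :=
    comparable.comp (fst.comp (fst.comp fst)) (fst.comp (fst.comp snd))
  have comparable₂ : PrimrecRel fun r s : PatternEntry => r.1.2 <+: s.1.2 ∨ s.1.2 <+: r.1.2 :=
    comparable.comp (snd.comp (fst.comp fst)) (snd.comp (fst.comp snd))
  have agree₁ : PrimrecRel fun r s : PatternEntry =>
      ReplacementsAgree (r.1.1, r.2.1) (s.1.1, s.2.1) := primrecRel_replacementsAgree.comp
    (pair (fst.comp (fst.comp fst)) (fst.comp (snd.comp fst)))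
    (pair (fst.comp (fst.comp snd)) (fst.comp (snd.comp snd)))
  have agree₂ : PrimrecRel fun r s : PatternEntry =>
      ReplacementsAgree (r.1.2, r.2.2) (s.1.2, s.2.2) := primrecRel_replacementsAgree.comp
    (pair (snd.comp (fst.comp fst)) (snd.comp (snd.comp fst)))
    (pair (snd.comp (fst.comp snd)) (snd.comp (snd.comp snd)))
  exact ((comparable₁.not.or comparable₂.not).or (agree₁.and agree₂)).of_eq fun _ => by
    rw [entriesAgree_iff]
    tauto

end Primrec

/-- Equality of elements of `2V` given by numbered pattern pairs is decidable: there is a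
computable predicate on pairs of numbered pattern pairs which, whenever the two pattern
pairs represent maps `f` and `g` of `C²`, holds exactly when `f = g`. -/
theorem pattern_pair_equality_decidable :
    ∃ P : PatternPair × PatternPair → Prop, ComputablePred P ∧
      ∀ (pp₁ pp₂ : PatternPair) (f g : Cantor × Cantor → Cantor × Cantor),
        Represents pp₁ f → Represents pp₂ g → (P (pp₁, pp₂) ↔ f = g) :=
  ⟨fun x => ∀ r ∈ x.1, ∀ s ∈ x.2, EntriesAgree r s,
    (primrecRel_entriesAgree.swap.forall_mem_list.swap.forall_mem_list).computablePred,
    fun _ _ _ _ hf hg => (hf.eq_iff_forall_entriesAgree hg).symm⟩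
end

section
/- Let A = {00, 01, 10, 11}, let π : A^∞ → C² be the interleaving bijection π(ε₁δ₁, ε₂δ₂, ε₃δ₃, …) = (ε₁ε₂ε₃⋯, δ₁δ₂δ₃⋯), and for finite binary strings α, β let μ_{α,β} : C² → C² be the map μ_{α,β}(ψ, ω) = (αψ, βω). Then the function μ_{α,β}^π = π⁻¹ ∘ μ_{α,β} ∘ π : A^∞ → A^∞ is a rational function. -/
/-- An asynchronous transducer over the alphabet `A`: a finite set of states `S`, an
initial state, and a transition function giving, for each state and input letter, the
new state and the finite output word. -/
structure Transducer (A : Type) where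
  /-- The set of states. -/
  S : Type
  /-- The set of states is finite. -/
  fin : Finite S
  /-- The initial state. -/
  init : S
  /-- The transition function. -/
  step : S → A → S × List A

/-- The state sequence of the transducer on the infinite input string `x`. -/
def Transducer.states {A : Type} (T : Transducer A) (x : ℕ → A) : ℕ → T.S
  | 0 => T.init
  | k + 1 => (T.step (T.states x k) (x k)).1

/-- The finite output word produced at step `k` on input string `x`. -/
def Transducer.block {A : Type} (T : Transducer A) (x : ℕ → A) (k : ℕ) : List A :=
  (T.step (T.states x k) (x k)).2

/-- The concatenation of the output words produced during the first `k` steps: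
a finite prefix of the output string. -/
def Transducer.outPrefix {A : Type} (T : Transducer A) (x : ℕ → A) (k : ℕ) : List A :=
  ((List.range k).map (T.block x)).flatten

/-- The transducer is nondegenerate: every infinite input string produces an infinite
output string. -/
def Transducer.Nondegenerate {A : Type} (T : Transducer A) : Prop :=
  ∀ (x : ℕ → A) (k : ℕ), ∃ m, k ≤ (T.outPrefix x m).length

/-- `y` is the output string of the transducer on input string `x`: every finite prefix
of the produced output is a prefix of `y`. -/
def Transducer.IsOutput {A : Type} (T : Transducer A) (x y : ℕ → A) : Prop :=
  ∀ (k i : ℕ) (h : i < (T.outPrefix x k).length), y i = (T.outPrefix x k).get ⟨i, h⟩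

/-- `f : A^∞ → A^∞` is a rational function: it is the input-output map of some
nondegenerate asynchronous transducer. -/
def IsRational {A : Type} (f : (ℕ → A) → (ℕ → A)) : Prop :=
  ∃ T : Transducer A, T.Nondegenerate ∧ ∀ x, T.IsOutput x (f x)

/-- The interleaving bijection `π` from infinite strings over the four-letter alphabet
`A = {00, 01, 10, 11}` (pairs of binary digits) to `C²`:
`π(ε₁δ₁, ε₂δ₂, …) = (ε₁ε₂⋯, δ₁δ₂⋯)`. -/
def interleave : (ℕ → Bool × Bool) ≃ Cantor × Cantor where
  toFun x := (fun k => (x k).1, fun k => (x k).2)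
  invFun p := fun k => (p.1 k, p.2 k)
  left_inv x := rfl
  right_inv p := rfl

/-- The prefix-prepending map `μ_{α,β}(ψ, ω) = (αψ, βω)` on `C²`. -/
def mu (α β : List Bool) (p : Cantor × Cantor) : Cantor × Cantor :=
  (cat α p.1, cat β p.2)

/-! The map `μ_{α,β}^π` is synchronous: the `k`-th output letter is `((αψ)_k, (βω)_k)`, and
`(αψ)_k` is either a letter of `α` or the input letter `ψ_{k-|α|}` read `|α|` steps earlier
(likewise for `β`). So it is computed letter by letter by a Mealy machine whose state is a pair
of FIFO queues of lengths `|α|` and `|β|`, initially holding `α` and `β`: at each step both queues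
push the current input coordinate and pop the output coordinate. -/

namespace Transducer

variable {A σ : Type} [Finite σ] (s₀ : σ) (δ : σ → A → σ × A)

def ofMealy : Transducer A where
  S := σ
  fin := ‹_›
  init := s₀
  step s a := ((δ s a).1, [(δ s a).2])

theorem outPrefix_ofMealy (x : ℕ → A) (k : ℕ) :
    (ofMealy s₀ δ).outPrefix x k =
      (List.range k).map fun i => (δ ((ofMealy s₀ δ).states x i) (x i)).2 :=
  List.flatMap_pure_eq_map _ _

theorem isRational_of_ofMealy (f : (ℕ → A) → ℕ → A)
    (hf : ∀ x k, f x k = (δ ((ofMealy s₀ δ).states x k) (x k)).2) : IsRational f := by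
  refine ⟨ofMealy s₀ δ, fun x k => ⟨k, by simp [outPrefix_ofMealy]⟩, fun x k i hi => ?_⟩
  simp [outPrefix_ofMealy, hf]

end Transducer

def pairStep {σ τ A B : Type} (δ : σ → A → σ × A) (ε : τ → B → τ × B) (s : σ × τ)
    (a : A × B) : (σ × τ) × (A × B) :=
  (((δ s.1 a.1).1, (ε s.2 a.2).1), ((δ s.1 a.1).2, (ε s.2 a.2).2))

def pushPop {B : Type} : List B → B → List B × B
  | [], b => ([], b)
  | c :: q, b => (q ++ [b], c)

theorem length_pushPop_fst {B : Type} (q : List B) (b : B) :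
    (pushPop q b).1.length = q.length := by
  cases q <;> simp [pushPop]

def queueStep {B : Type} {n : ℕ} (q : List.Vector B n) (b : B) : List.Vector B n × B :=
  (⟨(pushPop q.1 b).1, (length_pushPop_fst q.1 b).trans q.2⟩, (pushPop q.1 b).2)

theorem cat_nil (ω : Cantor) : cat [] ω = ω := by
  funext k
  simp [cat]

theorem cat_of_lt {w : List Bool} (ω : Cantor) {k : ℕ} (hk : k < w.length) :
    cat w ω k = w[k] := by
  simp [cat, hk]

theorem cat_add_length (w : List Bool) (ω : Cantor) (k : ℕ) :
    cat w ω (k + w.length) = ω k := by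
  simp [cat]

def catWindow (w : List Bool) (ω : Cantor) (k : ℕ) : List.Vector Bool w.length :=
  ⟨(List.range w.length).map fun i => cat w ω (k + i), by simp⟩

theorem catWindow_zero (w : List Bool) (ω : Cantor) : catWindow w ω 0 = ⟨w, rfl⟩ := by
  refine Subtype.ext (List.ext_getElem (by simp [catWindow]) fun i h _ => ?_)
  simp [catWindow, cat_of_lt ω (by simpa [catWindow] using h)]

theorem queueStep_catWindow (w : List Bool) (ω : Cantor) (k : ℕ) :
    queueStep (catWindow w ω k) (ω k) = (catWindow w ω (k + 1), cat w ω k) := by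
  suffices h : pushPop ((List.range w.length).map fun i => cat w ω (k + i)) (ω k) =
      ((List.range w.length).map fun i => cat w ω (k + 1 + i), cat w ω k) by
    simp only [queueStep, catWindow, h]
  rcases w with _ | ⟨c, w⟩
  · simp [pushPop, cat_nil]
  · have hlast : cat (c :: w) ω (k + (w.length + 1)) = ω k := cat_add_length (c :: w) ω k
    conv_lhs => rw [List.length_cons, List.range_succ_eq_map]
    rw [List.length_cons, List.range_succ]
    simp [pushPop, Nat.add_right_comm k 1, Nat.add_assoc, hlast]

theorem pairStep_queueStep_catWindow (α β : List Bool) (ψ ω : Cantor) (k : ℕ) :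
    pairStep queueStep queueStep (catWindow α ψ k, catWindow β ω k) (ψ k, ω k) =
      ((catWindow α ψ (k + 1), catWindow β ω (k + 1)), (cat α ψ k, cat β ω k)) := by
  simp only [pairStep, queueStep_catWindow]

theorem states_ofMealy_queueStep (α β : List Bool) (x : ℕ → Bool × Bool) (k : ℕ) :
    (Transducer.ofMealy (⟨α, rfl⟩, ⟨β, rfl⟩) (pairStep queueStep queueStep)).states x k =
      (catWindow α (interleave x).1 k, catWindow β (interleave x).2 k) := by
  induction k with
  | zero => simp only [catWindow_zero]; rfl
  | succ k ih =>
    show (pairStep queueStep queueStep _ (x k)).1 = _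
    rw [ih]
    exact congrArg Prod.fst (pairStep_queueStep_catWindow α β _ _ k)

/-- For any finite binary strings `α` and `β`, the conjugate
`μ_{α,β}^π = π⁻¹ ∘ μ_{α,β} ∘ π` of the prefix-prepending map by the interleaving
bijection is a rational function on the infinite strings over `{00, 01, 10, 11}`. -/
theorem mu_pi_is_rational (α β : List Bool) :
    IsRational (⇑interleave.symm ∘ mu α β ∘ ⇑interleave) := by
  refine Transducer.isRational_of_ofMealy (⟨α, rfl⟩, ⟨β, rfl⟩) (pairStep queueStep queueStep) _
    fun x k => ?_
  rw [states_ofMealy_queueStep]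
  exact (congrArg Prod.snd (pairStep_queueStep_catWindow α β _ _ k)).symm
end
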